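/- Let K and H be positive integers and let c1 > 0, c2 > 0, eta > 0, B > 0, M > 0, d >= 0, eps >= 0 be real numbers. Suppose we are given real numbers a_k, b_k, a'_k, b'_k, Delta_k, Delta'_k for k in {1,...,K} and nonnegative real numbers ef(k,h,s) and eg(k,h,s) for k in {1,...,K}, h in {1,...,H}, s in {1,...,k-1}, satisfying: (i) sum_k a_k <= eta * sum_k Delta_k; (ii) for every k, Delta_k <= -c1 * sum_{h,s<k} ef(k,h,s) + c1*B*M; (iii) for every zeta > 0, sum_k b_k <= (zeta/2) * sum_{k,h,s<k} ef(k,h,s) + d/(2*zeta) + sqrt(d*H*K) + eps*H*K; (iv) sum_k a'_k <= eta * sum_k Delta'_k; (v) for every k, Delta'_k <= -c2 * sum_{h,s<k} eg(k,h,s) + c2*B*M; (vi) for every zeta > 0, sum_k b'_k <= (zeta/2) * sum_{k,h,s<k} eg(k,h,s) + d/(2*zeta) + sqrt(d*H*K) + eps*H*K. Then sum_{k=1}^K (a_k + b_k + a'_k + b'_k) <= (c1 + c2)*eta*B*K*M + d/(4*c1*eta) + d/(4*c2*eta) + 2*sqrt(d*H*K) + 2*eps*H*K. -/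

import Mathlib

/-!
Each player is handled separately. Summing the per-episode loss-difference bounds gives
`∑ aₖ ≤ -c η ∑ efₖ + c η B M K`, and the eluder bound taken at `ζ = 2 c η` contributes
exactly `+ c η ∑ efₖ`, so the discrepancy sums cancel, leaving `d / (4 c η)` from the
`d / (2 ζ)` term.
-/

open Finset

section

variable {ι : Type*} (s : Finset ι)

theorem sum_le_neg_mul_sum_add_card_mul {Δ E : ι → ℝ} {c m : ℝ}
    (h : ∀ k ∈ s, Δ k ≤ -c * E k + m) :
    ∑ k ∈ s, Δ k ≤ -c * ∑ k ∈ s, E k + #s * m :=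
  calc ∑ k ∈ s, Δ k ≤ ∑ k ∈ s, (-c * E k + m) := sum_le_sum h
    _ = -c * ∑ k ∈ s, E k + #s * m := by
      rw [sum_add_distrib, sum_const, nsmul_eq_mul, mul_sum]

theorem sum_add_le_of_loss_bound_of_eluder {a b Δ E : ι → ℝ} {c η m d R : ℝ}
    (hc : 0 < c) (hη : 0 < η)
    (ha : ∑ k ∈ s, a k ≤ η * ∑ k ∈ s, Δ k)
    (hΔ : ∀ k ∈ s, Δ k ≤ -c * E k + m)
    (hb : ∀ ζ : ℝ, 0 < ζ →
      ∑ k ∈ s, b k ≤ ζ / 2 * ∑ k ∈ s, E k + d / (2 * ζ) + R) :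
    ∑ k ∈ s, (a k + b k) ≤ η * #s * m + d / (4 * c * η) + R := by
  have hΔsum := mul_le_mul_of_nonneg_left (sum_le_neg_mul_sum_add_card_mul s hΔ) hη.le
  have hbζ := hb (2 * c * η) (by positivity)
  have hζ : d / (2 * (2 * c * η)) = d / (4 * c * η) := by ring
  rw [sum_add_distrib]
  linarith

end

theorem stmt3_general (K H : ℕ)
    (c1 c2 η B M d eps : ℝ) (hc1 : 0 < c1) (hc2 : 0 < c2) (hη : 0 < η)
    (a b a' b' Δ Δ' : ℕ → ℝ) (ef eg : ℕ → ℕ → ℕ → ℝ)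
    (h1 : ∑ k ∈ Icc 1 K, a k ≤ η * ∑ k ∈ Icc 1 K, Δ k)
    (h2 : ∀ k ∈ Icc 1 K,
      Δ k ≤ -c1 * ∑ h ∈ Icc 1 H, ∑ s ∈ Icc 1 (k - 1), ef k h s + c1 * B * M)
    (h3 : ∀ ζ : ℝ, 0 < ζ →
      ∑ k ∈ Icc 1 K, b k ≤
        ζ / 2 * ∑ k ∈ Icc 1 K, ∑ h ∈ Icc 1 H, ∑ s ∈ Icc 1 (k - 1), ef k h s
        + d / (2 * ζ) + Real.sqrt (d * H * K) + eps * H * K)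
    (h4 : ∑ k ∈ Icc 1 K, a' k ≤ η * ∑ k ∈ Icc 1 K, Δ' k)
    (h5 : ∀ k ∈ Icc 1 K,
      Δ' k ≤ -c2 * ∑ h ∈ Icc 1 H, ∑ s ∈ Icc 1 (k - 1), eg k h s + c2 * B * M)
    (h6 : ∀ ζ : ℝ, 0 < ζ →
      ∑ k ∈ Icc 1 K, b' k ≤
        ζ / 2 * ∑ k ∈ Icc 1 K, ∑ h ∈ Icc 1 H, ∑ s ∈ Icc 1 (k - 1), eg k h s
        + d / (2 * ζ) + Real.sqrt (d * H * K) + eps * H * K) :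
    ∑ k ∈ Icc 1 K, (a k + b k + a' k + b' k) ≤
      (c1 + c2) * η * B * K * M + d / (4 * c1 * η) + d / (4 * c2 * η)
      + 2 * Real.sqrt (d * H * K) + 2 * (eps * H * K) := by
  have hmax := sum_add_le_of_loss_bound_of_eluder _ hc1 hη h1 h2
    fun ζ hζ => (h3 ζ hζ).trans_eq (add_assoc _ _ _)
  have hmin := sum_add_le_of_loss_bound_of_eluder _ hc2 hη h4 h5
    fun ζ hζ => (h6 ζ hζ).trans_eq (add_assoc _ _ _)
  have hsplit := sum_add_distrib (s := Icc 1 K) (f := fun k => a k + b k)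
    (g := fun k => a' k + b' k)
  simp only [← add_assoc] at hsplit
  have hcard : (#(Icc 1 K) : ℝ) = K := by simp
  rw [hcard] at hmax hmin
  linarith

/-- Intermediate step in the proof of Theorem 6.1 (regret of MEX-MG), before
optimizing the tuning parameter η. -/
theorem stmt3 (K H : ℕ) (hK : 0 < K) (hH : 0 < H)
    (c1 c2 η B M d eps : ℝ) (hc1 : 0 < c1) (hc2 : 0 < c2) (hη : 0 < η)
    (hB : 0 < B) (hM : 0 < M) (hd : 0 ≤ d) (heps : 0 ≤ eps)
    (a b a' b' Δ Δ' : ℕ → ℝ) (ef eg : ℕ → ℕ → ℕ → ℝ)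
    (hef : ∀ k ∈ Icc 1 K, ∀ h ∈ Icc 1 H, ∀ s ∈ Icc 1 (k - 1), 0 ≤ ef k h s)
    (heg : ∀ k ∈ Icc 1 K, ∀ h ∈ Icc 1 H, ∀ s ∈ Icc 1 (k - 1), 0 ≤ eg k h s)
    (h1 : ∑ k ∈ Icc 1 K, a k ≤ η * ∑ k ∈ Icc 1 K, Δ k)
    (h2 : ∀ k ∈ Icc 1 K,
      Δ k ≤ -c1 * ∑ h ∈ Icc 1 H, ∑ s ∈ Icc 1 (k - 1), ef k h s + c1 * B * M)
    (h3 : ∀ ζ : ℝ, 0 < ζ →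
      ∑ k ∈ Icc 1 K, b k ≤
        ζ / 2 * ∑ k ∈ Icc 1 K, ∑ h ∈ Icc 1 H, ∑ s ∈ Icc 1 (k - 1), ef k h s
        + d / (2 * ζ) + Real.sqrt (d * H * K) + eps * H * K)
    (h4 : ∑ k ∈ Icc 1 K, a' k ≤ η * ∑ k ∈ Icc 1 K, Δ' k)
    (h5 : ∀ k ∈ Icc 1 K,
      Δ' k ≤ -c2 * ∑ h ∈ Icc 1 H, ∑ s ∈ Icc 1 (k - 1), eg k h s + c2 * B * M)
    (h6 : ∀ ζ : ℝ, 0 < ζ →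
      ∑ k ∈ Icc 1 K, b' k ≤
        ζ / 2 * ∑ k ∈ Icc 1 K, ∑ h ∈ Icc 1 H, ∑ s ∈ Icc 1 (k - 1), eg k h s
        + d / (2 * ζ) + Real.sqrt (d * H * K) + eps * H * K) :
    ∑ k ∈ Icc 1 K, (a k + b k + a' k + b' k) ≤
      (c1 + c2) * η * B * K * M + d / (4 * c1 * η) + d / (4 * c2 * η)
      + 2 * Real.sqrt (d * H * K) + 2 * (eps * H * K) :=
  stmt3_general K H c1 c2 η B M d eps hc1 hc2 hη a b a' b' Δ Δ' ef eg h1 h2 h3 h4 h5 h6
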